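/- Let α ∈ (0,1), p ∈ [1, n/α), q ∈ [1,∞), let μ be a nonnegative outer measure on ℝⁿ, and let 𝗆 : ℝⁿ → ℝ be a Borel function. Then: (a) if 𝗆 is μ-essentially bounded (𝗆 ∈ L^∞_μ) and there is a constant c > 0 with μ(E) ≤ c ( C_{α,p,∞}(E) )^{q/p} for every Borel set E ⊆ ℝⁿ, then there is a constant c' > 0 such that ‖𝗆 f‖_{L^{q,∞}_μ} ≤ c' ‖f‖_{Λ̇_α^{p,∞}} for every f ∈ Λ_α^{p,∞} ∩ C(ℝⁿ); and (b) if there is a constant c > 0 such that ‖𝗆 f‖_{L^{q,∞}_μ} ≤ c ‖f‖_{Λ̇_α^{p,∞}} for every f ∈ Λ_α^{p,∞} ∩ C(ℝⁿ), then there is a constant c' > 0 such that sup_{t>0} t^q μ({ x ∈ E : |𝗆(x)| > t }) ≤ c' ( C_{α,p,∞}(E) )^{q/p} for every Borel set E ⊆ ℝⁿ. -/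

import Mathlib

/-!
(a) Off a `μ`-null set `|m| ≤ λ`, so `{|m f| > t}` lies in the open set `{|f| > t/λ}`, on which
`(λ/t)|f|` is admissible; its capacity is therefore at most `(λ/t)^p ‖f‖^p`, and the trace
inequality for `μ` turns this into the weak-type bound.
(b) If `g` is admissible for `E`, then `g ≥ 1` on `E`, so `{x ∈ E : |m x| > t} ⊆ {|m g| > t}`;
the weak-type bound for `m g` and the infimum over `g` give the capacitary bound.
-/

open MeasureTheory ENNReal

noncomputable def besovSeminorm (n : ℕ) (α p : ℝ)
    (f : EuclideanSpace ℝ (Fin n) → ℝ) : ℝ≥0∞ :=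
  ⨆ (h : EuclideanSpace ℝ (Fin n)) (_ : h ≠ 0),
    ENNReal.ofReal (‖h‖ ^ (-α)) *
      eLpNorm (fun x => f (x + h) - f x) (ENNReal.ofReal p) volume

def besovAdmissible (n : ℕ) (α p : ℝ) (E : Set (EuclideanSpace ℝ (Fin n)))
    (f : EuclideanSpace ℝ (Fin n) → ℝ) : Prop :=
  MemLp f (ENNReal.ofReal p) volume ∧ besovSeminorm n α p f < ⊤ ∧ Continuous f ∧
    ∃ N : Set (EuclideanSpace ℝ (Fin n)), IsOpen N ∧ E ⊆ N ∧ ∀ x ∈ N, 1 ≤ f x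

noncomputable def besovCapacity (n : ℕ) (α p : ℝ)
    (E : Set (EuclideanSpace ℝ (Fin n))) : ℝ≥0∞ :=
  ⨅ (f : EuclideanSpace ℝ (Fin n) → ℝ) (_ : besovAdmissible n α p E f),
    besovSeminorm n α p f ^ p

noncomputable def besovPerimeter (n : ℕ) (α p : ℝ)
    (E : Set (EuclideanSpace ℝ (Fin n))) : ℝ≥0∞ :=
  besovSeminorm n α p (E.indicator fun _ => (1 : ℝ))

noncomputable def weakLorentzNorm {X : Type*} (μ : OuterMeasure X) (q : ℝ) (g : X → ℝ) :
    ℝ≥0∞ :=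
  ⨆ (t : ℝ) (_ : 0 < t), (ENNReal.ofReal t ^ q * μ {x | t < |g x|}) ^ (1 / q)

lemma ENNReal.iInf_rpow {ι : Sort*} (f : ι → ℝ≥0∞) {r : ℝ} (hr : 0 < r) :
    (⨅ i, f i) ^ r = ⨅ i, f i ^ r :=
  (ENNReal.orderIsoRpow r hr).map_iInf f

section WeakLorentz

variable {X : Type*} (μ : OuterMeasure X)

lemma weakLorentzNorm_le_iff {q : ℝ} (hq : 0 < q) {g : X → ℝ} {B : ℝ≥0∞} :
    weakLorentzNorm μ q g ≤ B ↔
      ∀ t > 0, ENNReal.ofReal t ^ q * μ {x | t < |g x|} ≤ B ^ q := by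
  simp only [weakLorentzNorm, iSup₂_le_iff, one_div, ENNReal.rpow_inv_le_iff hq, gt_iff_lt]

lemma measure_setOf_lt_abs_mul_le {m f : X → ℝ} {lam : ℝ} (hlam : 0 < lam)
    (hnull : μ {x | lam < |m x|} = 0) (t : ℝ) :
    μ {x | t < |m x * f x|} ≤ μ {x | t / lam < |f x|} := by
  have hsub : {x | t < |m x * f x|} ⊆ {x | lam < |m x|} ∪ {x | t / lam < |f x|} := by
    intro x hx
    by_contra! hxc
    simp only [Set.mem_union, Set.mem_ofPred_eq, not_or, not_lt] at hxc
    have : |m x * f x| ≤ t := calc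
      |m x * f x| = |m x| * |f x| := abs_mul _ _
      _ ≤ lam * (t / lam) := mul_le_mul hxc.1 hxc.2 (abs_nonneg _) hlam.le
      _ = t := mul_div_cancel₀ t hlam.ne'
    exact this.not_gt hx
  calc μ {x | t < |m x * f x|} ≤ μ {x | lam < |m x|} + μ {x | t / lam < |f x|} :=
        (measure_mono hsub).trans (measure_union_le _ _)
    _ = μ {x | t / lam < |f x|} := by rw [hnull, zero_add]

end WeakLorentz

section Besov

variable {n : ℕ} {α p : ℝ}

lemma besovSeminorm_le_of_abs_sub_le {f g : EuclideanSpace ℝ (Fin n) → ℝ} {a : ℝ}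
    (hgf : ∀ x y, |g x - g y| ≤ a * |f x - f y|) :
    besovSeminorm n α p g ≤ ENNReal.ofReal a * besovSeminorm n α p f := by
  rw [besovSeminorm, besovSeminorm, ENNReal.mul_iSup]
  refine iSup_mono fun h => ?_
  rw [ENNReal.mul_iSup]
  refine iSup_mono fun _ => ?_
  rw [mul_left_comm]
  gcongr
  exact eLpNorm_le_mul_eLpNorm_of_ae_le_mul (ae_of_all _ fun x => hgf _ _) _

lemma besovCapacity_setOf_lt_abs_le (hp : 0 ≤ p) {f : EuclideanSpace ℝ (Fin n) → ℝ}
    (hf : MemLp f (ENNReal.ofReal p) volume) (hS : besovSeminorm n α p f < ⊤)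
    (hfc : Continuous f) {s : ℝ} (hs : 0 < s) :
    besovCapacity n α p {x | s < |f x|} ≤
      (ENNReal.ofReal s⁻¹ * besovSeminorm n α p f) ^ p := by
  have hg : besovSeminorm n α p (fun x => s⁻¹ * |f x|) ≤
      ENNReal.ofReal s⁻¹ * besovSeminorm n α p f :=
    besovSeminorm_le_of_abs_sub_le fun x y => by
      rw [← mul_sub, abs_mul, abs_of_pos (inv_pos.2 hs)]
      exact mul_le_mul_of_nonneg_left (abs_abs_sub_abs_le_abs_sub (f x) (f y)) (by positivity)
  have hadm : besovAdmissible n α p {x | s < |f x|} (fun x => s⁻¹ * |f x|) :=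
    ⟨hf.abs.const_mul _, hg.trans_lt (mul_lt_top ofReal_lt_top hS), by fun_prop,
      _, isOpen_lt continuous_const hfc.abs, subset_rfl,
      fun x hx => (le_inv_mul_iff₀ hs).2 (by simpa using hx.le)⟩
  exact (iInf₂_le _ hadm).trans (ENNReal.rpow_le_rpow hg hp)

lemma le_mul_besovCapacity_rpow {E : Set (EuclideanSpace ℝ (Fin n))} {x a : ℝ≥0∞}
    (ha₀ : a ≠ 0) (ha : a ≠ ⊤) {r : ℝ} (hr : 0 < r)
    (h : ∀ f, besovAdmissible n α p E f → x ≤ a * (besovSeminorm n α p f ^ p) ^ r) :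
    x ≤ a * besovCapacity n α p E ^ r := by
  simp only [besovCapacity, ENNReal.iInf_rpow _ hr, ENNReal.mul_iInf_of_ne ha₀ ha]
  exact le_iInf₂ h

variable {q : ℝ} (μ : OuterMeasure (EuclideanSpace ℝ (Fin n)))
  {m : EuclideanSpace ℝ (Fin n) → ℝ}

lemma weakLorentzNorm_mul_le_of_measure_le_besovCapacity (hp : 0 < p) (hq : 0 < q)
    {lam c : ℝ} (hlam : 0 < lam) (hc : 0 ≤ c) (hnull : μ {x | lam < |m x|} = 0)
    (hcap : ∀ E, MeasurableSet E → μ E ≤ ENNReal.ofReal c * besovCapacity n α p E ^ (q / p))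
    {f : EuclideanSpace ℝ (Fin n) → ℝ} (hf : MemLp f (ENNReal.ofReal p) volume)
    (hS : besovSeminorm n α p f < ⊤) (hfc : Continuous f) :
    weakLorentzNorm μ q (fun x => m x * f x) ≤
      ENNReal.ofReal (c ^ (1 / q) * lam) * besovSeminorm n α p f := by
  set S := besovSeminorm n α p f
  rw [weakLorentzNorm_le_iff μ hq]
  intro t ht
  have hopen : IsOpen {x | t / lam < |f x|} := isOpen_lt continuous_const hfc.abs
  have hreal : t ^ q * (c * (lam / t) ^ q) = (c ^ (1 / q) * lam) ^ q := by
    rw [Real.mul_rpow (by positivity) hlam.le, ← Real.rpow_mul hc, one_div_mul_cancel hq.ne',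
      Real.rpow_one, Real.div_rpow hlam.le ht.le]
    field_simp
  calc ENNReal.ofReal t ^ q * μ {x | t < |m x * f x|}
      ≤ ENNReal.ofReal t ^ q *
          (ENNReal.ofReal c * besovCapacity n α p {x | t / lam < |f x|} ^ (q / p)) := by
        gcongr
        exact (measure_setOf_lt_abs_mul_le μ hlam hnull t).trans (hcap _ hopen.measurableSet)
    _ ≤ ENNReal.ofReal t ^ q *
          (ENNReal.ofReal c * ((ENNReal.ofReal (t / lam)⁻¹ * S) ^ p) ^ (q / p)) := by
        gcongr
        exact besovCapacity_setOf_lt_abs_le hp.le hf hS hfc (by positivity)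
    _ = (ENNReal.ofReal (c ^ (1 / q) * lam) * S) ^ q := by
        rw [← ENNReal.rpow_mul, mul_div_cancel₀ q hp.ne', inv_div,
          ENNReal.mul_rpow_of_nonneg _ _ hq.le, ENNReal.mul_rpow_of_nonneg _ _ hq.le,
          ENNReal.ofReal_rpow_of_pos ht, ENNReal.ofReal_rpow_of_pos (by positivity),
          ENNReal.ofReal_rpow_of_nonneg (by positivity) hq.le, ← hreal, ENNReal.ofReal_mul (by positivity),
          ENNReal.ofReal_mul hc]
        ring

lemma iSup_measure_inter_le_besovCapacity_of_weakLorentzNorm_mul_le (hp : 0 < p) (hq : 0 < q)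
    {c : ℝ} (hc : 0 < c)
    (hbound : ∀ f, MemLp f (ENNReal.ofReal p) volume → besovSeminorm n α p f < ⊤ →
      Continuous f →
        weakLorentzNorm μ q (fun x => m x * f x) ≤ ENNReal.ofReal c * besovSeminorm n α p f)
    {E : Set (EuclideanSpace ℝ (Fin n))} :
    (⨆ (t : ℝ) (_ : 0 < t), ENNReal.ofReal t ^ q * μ {x ∈ E | t < |m x|}) ≤
      ENNReal.ofReal (c ^ q) * besovCapacity n α p E ^ (q / p) := by
  refine iSup₂_le fun t ht => le_mul_besovCapacity_rpow (by positivity) ofReal_ne_top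
    (by positivity) fun g ⟨hgL, hgS, hgc, N, _, hEN, hgN⟩ => ?_
  have hsub : {x | x ∈ E ∧ t < |m x|} ⊆ {x | t < |m x * g x|} := by
    rintro x ⟨hxE, hxm⟩
    have hg1 : 1 ≤ g x := hgN x (hEN hxE)
    rw [Set.mem_ofPred_eq, abs_mul, abs_of_nonneg (zero_le_one.trans hg1)]
    exact hxm.trans_le (le_mul_of_one_le_right (abs_nonneg _) hg1)
  calc ENNReal.ofReal t ^ q * μ {x | x ∈ E ∧ t < |m x|}
      ≤ ENNReal.ofReal t ^ q * μ {x | t < |m x * g x|} := by gcongr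
    _ ≤ (ENNReal.ofReal c * besovSeminorm n α p g) ^ q :=
        (weakLorentzNorm_le_iff μ hq).1 (hbound g hgL hgS hgc) t ht
    _ = ENNReal.ofReal (c ^ q) * (besovSeminorm n α p g ^ p) ^ (q / p) := by
        rw [ENNReal.mul_rpow_of_nonneg _ _ hq.le, ENNReal.ofReal_rpow_of_pos hc,
          ← ENNReal.rpow_mul, mul_div_cancel₀ q hp.ne']

end Besov

theorem besov_pointwise_multiplier_general (n : ℕ) (α p q : ℝ)
    (hp : 1 ≤ p) (hq : 1 ≤ q)
    (μ : MeasureTheory.OuterMeasure (EuclideanSpace ℝ (Fin n)))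
    (m : EuclideanSpace ℝ (Fin n) → ℝ) :
    ((∃ lam : ℝ, 0 < lam ∧ μ {x | lam < |m x|} = 0) →
      (∃ c : ℝ, 0 < c ∧ ∀ E : Set (EuclideanSpace ℝ (Fin n)), MeasurableSet E →
        μ E ≤ ENNReal.ofReal c * besovCapacity n α p E ^ (q / p)) →
      ∃ c' : ℝ, 0 < c' ∧ ∀ f : EuclideanSpace ℝ (Fin n) → ℝ,
        MemLp f (ENNReal.ofReal p) volume → besovSeminorm n α p f < ⊤ → Continuous f →
        (⨆ (t : ℝ) (_ : 0 < t), (ENNReal.ofReal t ^ q * μ {x | t < |m x * f x|}) ^ (1 / q)) ≤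
          ENNReal.ofReal c' * besovSeminorm n α p f) ∧
    ((∃ c : ℝ, 0 < c ∧ ∀ f : EuclideanSpace ℝ (Fin n) → ℝ,
        MemLp f (ENNReal.ofReal p) volume → besovSeminorm n α p f < ⊤ → Continuous f →
        (⨆ (t : ℝ) (_ : 0 < t), (ENNReal.ofReal t ^ q * μ {x | t < |m x * f x|}) ^ (1 / q)) ≤
          ENNReal.ofReal c * besovSeminorm n α p f) →
      ∃ c' : ℝ, 0 < c' ∧ ∀ E : Set (EuclideanSpace ℝ (Fin n)), MeasurableSet E →
        (⨆ (t : ℝ) (_ : 0 < t), ENNReal.ofReal t ^ q * μ {x ∈ E | t < |m x|}) ≤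
          ENNReal.ofReal c' * besovCapacity n α p E ^ (q / p)) := by
  have hp₀ : 0 < p := by linarith
  have hq₀ : 0 < q := by linarith
  refine ⟨fun ⟨lam, hlam, hnull⟩ ⟨c, hc, hcap⟩ => ⟨c ^ (1 / q) * lam, by positivity, ?_⟩,
    fun ⟨c, hc, hbound⟩ => ⟨c ^ q, by positivity, ?_⟩⟩
  · exact fun f hf hS hfc =>
      weakLorentzNorm_mul_le_of_measure_le_besovCapacity μ hp₀ hq₀ hlam hc.le hnull hcap hf hS hfc
  · exact fun E _ =>
      iSup_measure_inter_le_besovCapacity_of_weakLorentzNorm_mul_le μ hp₀ hq₀ hc hbound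

theorem besov_pointwise_multiplier (n : ℕ) (α p q : ℝ)
    (hα : α ∈ Set.Ioo (0 : ℝ) 1) (hp : 1 ≤ p) (hpn : p < (n : ℝ) / α) (hq : 1 ≤ q)
    (μ : MeasureTheory.OuterMeasure (EuclideanSpace ℝ (Fin n)))
    (m : EuclideanSpace ℝ (Fin n) → ℝ) (hm : Measurable m) :
    ((∃ lam : ℝ, 0 < lam ∧ μ {x | lam < |m x|} = 0) →
      (∃ c : ℝ, 0 < c ∧ ∀ E : Set (EuclideanSpace ℝ (Fin n)), MeasurableSet E →
        μ E ≤ ENNReal.ofReal c * besovCapacity n α p E ^ (q / p)) →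
      ∃ c' : ℝ, 0 < c' ∧ ∀ f : EuclideanSpace ℝ (Fin n) → ℝ,
        MemLp f (ENNReal.ofReal p) volume → besovSeminorm n α p f < ⊤ → Continuous f →
        (⨆ (t : ℝ) (_ : 0 < t), (ENNReal.ofReal t ^ q * μ {x | t < |m x * f x|}) ^ (1 / q)) ≤
          ENNReal.ofReal c' * besovSeminorm n α p f) ∧
    ((∃ c : ℝ, 0 < c ∧ ∀ f : EuclideanSpace ℝ (Fin n) → ℝ,
        MemLp f (ENNReal.ofReal p) volume → besovSeminorm n α p f < ⊤ → Continuous f →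
        (⨆ (t : ℝ) (_ : 0 < t), (ENNReal.ofReal t ^ q * μ {x | t < |m x * f x|}) ^ (1 / q)) ≤
          ENNReal.ofReal c * besovSeminorm n α p f) →
      ∃ c' : ℝ, 0 < c' ∧ ∀ E : Set (EuclideanSpace ℝ (Fin n)), MeasurableSet E →
        (⨆ (t : ℝ) (_ : 0 < t), ENNReal.ofReal t ^ q * μ {x ∈ E | t < |m x|}) ≤
          ENNReal.ofReal c' * besovCapacity n α p E ^ (q / p)) :=
  besov_pointwise_multiplier_general n α p q hp hq μ m
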